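/- Let T be a tree with threshold assignment τ satisfying 1≤τ(u)≤d(u) for all u, and let v be a non-leaf node with τ(v) > (number of non-leaf neighbors of v). Then any timed target set S_0,…,S_k of (T,τ) satisfies Σ_{i=0}^{k} |S_i ∩ ({v}∪L(v))| ≥ 2, where L(v) is the set of leaf neighbors of v. -/

import Mathlib

/-!
Let `B = {v} ∪ L(v)` and score a set `X` of nodes by `[v ∈ X] + [X meets L(v)]`. A leaf of `v`
is activated only after `v` is active, and since `τ(v) > l̄(v)` the non-leaf neighbours of `v`
cannot activate it alone, so `v` is activated only after some leaf of `v` is active. Hence the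
score of `Q_{t+1}` is at most that of `S_t ∪ Q_t`, and by induction the score of `Q_t` is at most
`Σ_{i<t} |S_i ∩ B|`. As `τ(v) ≤ d(v)`, `v` has a leaf, so `Q_k = V` scores `2`.
-/

open Finset
open scoped Classical

variable {V : Type*}

noncomputable def Qseq (G : SimpleGraph V) [Fintype V] (τ : V → ℕ) (S : ℕ → Finset V) :
    ℕ → Finset V
  | 0 => ∅
  | i + 1 => Finset.univ.filter fun v =>
      τ v ≤ (G.neighborFinset v ∩ (S i ∪ Qseq G τ S i)).card

def IsTTS (G : SimpleGraph V) [Fintype V] (τ : V → ℕ) (S : ℕ → Finset V) (k : ℕ) : Prop :=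
  S k = ∅ ∧ Qseq G τ S k = Finset.univ

def ttsSize (S : ℕ → Finset V) (k : ℕ) : ℕ := ∑ i ∈ Finset.range (k + 1), (S i).card

noncomputable def strictMaj (G : SimpleGraph V) [Fintype V] (v : V) : ℕ := (G.degree v + 2) / 2

noncomputable def npStep (G : SimpleGraph V) [Fintype V] (τ : V → ℕ) (A : Finset V) : Finset V :=
  Finset.univ.filter fun v => τ v ≤ (G.neighborFinset v ∩ A).card

def IsTS (G : SimpleGraph V) [Fintype V] (τ : V → ℕ) (S : Finset V) : Prop :=
  ∃ i : ℕ, (npStep G τ)^[i] S = Finset.univ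

noncomputable def MTT (G : SimpleGraph V) [Fintype V] (τ : V → ℕ) : ℕ :=
  sInf {m | ∃ (S : ℕ → Finset V) (k : ℕ), IsTTS G τ S k ∧ ttsSize S k = m}

/-- The set of leaf neighbors of `v` (neighbors of degree 1). -/
noncomputable def leafNbrs (T : SimpleGraph V) [Fintype V] (v : V) : Finset V :=
  (T.neighborFinset v).filter fun u => T.degree u = 1

/-- `l̄(v)`: the number of non-leaf neighbors of `v` (neighbors of degree `> 1`). -/
noncomputable def lbar (T : SimpleGraph V) [Fintype V] (v : V) : ℕ :=
  ((T.neighborFinset v).filter fun u => 1 < T.degree u).card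

/-- The class `A` of non-leaf nodes `v` with `τ(v) > l̄(v)`. -/
noncomputable def Aset (T : SimpleGraph V) [Fintype V] (τ : V → ℕ) : Finset V :=
  Finset.univ.filter fun v => 1 < T.degree v ∧ lbar T v < τ v

/-- The class `A''` of non-leaf nodes `v` with `τ(v) > l̄(v)` and `τ(v) = d(v)`. -/
noncomputable def Aset'' (T : SimpleGraph V) [Fintype V] (τ : V → ℕ) : Finset V :=
  Finset.univ.filter fun v => 1 < T.degree v ∧ lbar T v < τ v ∧ τ v = T.degree v

/-- The class `C` of non-leaf nodes `v` with `τ(v) = l̄(v)`. -/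
noncomputable def Cset (T : SimpleGraph V) [Fintype V] (τ : V → ℕ) : Finset V :=
  Finset.univ.filter fun v => 1 < T.degree v ∧ τ v = lbar T v

section TimedTargetSet

variable [Fintype V] {G : SimpleGraph V} {τ : V → ℕ} {S : ℕ → Finset V}

lemma Qseq_zero : Qseq G τ S 0 = ∅ := rfl

lemma mem_Qseq_succ {w : V} {t : ℕ} :
    w ∈ Qseq G τ S (t + 1) ↔ τ w ≤ #(G.neighborFinset w ∩ (S t ∪ Qseq G τ S t)) := by
  simp [Qseq]

lemma neighborFinset_eq_singleton_of_mem_leafNbrs {v u : V} (hu : u ∈ leafNbrs G v) :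
    G.neighborFinset u = {v} := by
  simp only [leafNbrs, mem_filter, SimpleGraph.mem_neighborFinset] at hu
  obtain ⟨w, hw⟩ := card_eq_one.mp ((G.card_neighborFinset_eq_degree u).trans hu.2)
  have hv : v ∈ G.neighborFinset u := (G.mem_neighborFinset u v).mpr hu.1.symm
  rw [hw, mem_singleton] at hv
  rw [hw, hv]

lemma self_notMem_leafNbrs (v : V) : v ∉ leafNbrs G v := by
  simp [leafNbrs]

lemma one_lt_degree_iff_ne_one_of_adj {v u : V} (h : G.Adj v u) :
    1 < G.degree u ↔ G.degree u ≠ 1 :=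
  have := h.degree_pos_right
  ⟨fun _ => by omega, fun _ => by omega⟩

lemma card_leafNbrs_add_lbar (v : V) : #(leafNbrs G v) + lbar G v = G.degree v := by
  have hlbar : lbar G v = #((G.neighborFinset v).filter fun u => ¬G.degree u = 1) :=
    congrArg card <| filter_congr fun u hu =>
      one_lt_degree_iff_ne_one_of_adj ((G.mem_neighborFinset v u).mp hu)
  rw [leafNbrs, hlbar, card_filter_add_card_filter_not, G.card_neighborFinset_eq_degree]

lemma leafNbrs_nonempty_of_lbar_lt_degree {v : V} (h : lbar G v < G.degree v) :
    (leafNbrs G v).Nonempty := by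
  rw [← card_pos]
  have := card_leafNbrs_add_lbar (G := G) v
  omega

lemma mem_of_leaf_mem_Qseq_succ {v u : V} {t : ℕ} (hu : u ∈ leafNbrs G v) (hτu : 1 ≤ τ u)
    (h : u ∈ Qseq G τ S (t + 1)) : v ∈ S t ∪ Qseq G τ S t := by
  obtain ⟨w, hw⟩ := card_pos.mp (hτu.trans (mem_Qseq_succ.mp h))
  rw [neighborFinset_eq_singleton_of_mem_leafNbrs hu, mem_inter, mem_singleton] at hw
  exact hw.1 ▸ hw.2

lemma leafNbrs_inter_nonempty_of_mem_Qseq_succ {v : V} {t : ℕ} (hvA : lbar G v < τ v)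
    (h : v ∈ Qseq G τ S (t + 1)) : (leafNbrs G v ∩ (S t ∪ Qseq G τ S t)).Nonempty := by
  by_contra hempty
  have hsub : G.neighborFinset v ∩ (S t ∪ Qseq G τ S t) ⊆
      (G.neighborFinset v).filter fun u => 1 < G.degree u := by
    intro w hw
    obtain ⟨hwN, hwX⟩ := mem_inter.mp hw
    refine mem_filter.mpr ⟨hwN, ?_⟩
    refine (one_lt_degree_iff_ne_one_of_adj ((G.mem_neighborFinset v w).mp hwN)).mpr
      fun h1 => ?_
    exact hempty ⟨w, mem_inter.mpr ⟨mem_filter.mpr ⟨hwN, h1⟩, hwX⟩⟩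
  exact absurd ((mem_Qseq_succ.mp h).trans (card_le_card hsub)) (not_le.mpr hvA)

end TimedTargetSet

section StarHits

variable {α : Type*} [DecidableEq α]

def starHits (a : α) (L X : Finset α) : ℕ :=
  (if a ∈ X then 1 else 0) + (if (L ∩ X).Nonempty then 1 else 0)

lemma starHits_empty (a : α) (L : Finset α) : starHits a L ∅ = 0 := by
  simp [starHits]

lemma starHits_univ [Fintype α] (a : α) {L : Finset α} (hL : L.Nonempty) :
    starHits a L univ = 2 := by
  simp [starHits, hL]

lemma starHits_union_le (a : α) (L X Y : Finset α) :
    starHits a L (X ∪ Y) ≤ starHits a L X + starHits a L Y := by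
  unfold starHits
  simp only [inter_union_distrib_left, union_nonempty, mem_union]
  split_ifs <;> simp_all

lemma starHits_le_card_inter_insert {a : α} {L : Finset α} (ha : a ∉ L) (X : Finset α) :
    starHits a L X ≤ #(X ∩ insert a L) := by
  have hLX : (if (L ∩ X).Nonempty then 1 else 0) ≤ #(X ∩ L) := by
    split_ifs with h
    · exact card_pos.mpr (inter_comm L X ▸ h)
    · exact Nat.zero_le _
  unfold starHits
  by_cases haX : a ∈ X
  · rw [inter_insert_of_mem haX, card_insert_of_notMem fun h => ha (mem_inter.mp h).2, if_pos haX]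
    omega
  · rw [inter_insert_of_notMem haX, if_neg haX]
    omega

lemma starHits_le_of_swap {a : α} {L X Y : Finset α} (ha : a ∈ Y → (L ∩ X).Nonempty)
    (hL : (L ∩ Y).Nonempty → a ∈ X) : starHits a L Y ≤ starHits a L X := by
  unfold starHits
  split_ifs <;> simp_all

end StarHits

lemma starHits_Qseq_le_sum [Fintype V] {G : SimpleGraph V} {τ : V → ℕ} {v : V}
    (hτL : ∀ u ∈ leafNbrs G v, 1 ≤ τ u) (hvA : lbar G v < τ v) (S : ℕ → Finset V)
    (t : ℕ) :
    starHits v (leafNbrs G v) (Qseq G τ S t) ≤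
      ∑ i ∈ range t, #(S i ∩ insert v (leafNbrs G v)) := by
  induction t with
  | zero => simp only [Qseq_zero, starHits_empty, range_zero, sum_empty, le_refl]
  | succ t ih =>
    have hstep : starHits v (leafNbrs G v) (Qseq G τ S (t + 1)) ≤
        starHits v (leafNbrs G v) (S t ∪ Qseq G τ S t) :=
      starHits_le_of_swap (leafNbrs_inter_nonempty_of_mem_Qseq_succ hvA)
        fun ⟨u, hu⟩ => mem_of_leaf_mem_Qseq_succ (mem_inter.mp hu).1
          (hτL u (mem_inter.mp hu).1) (mem_inter.mp hu).2
    calc starHits v (leafNbrs G v) (Qseq G τ S (t + 1))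
        ≤ starHits v (leafNbrs G v) (S t) + starHits v (leafNbrs G v) (Qseq G τ S t) :=
          hstep.trans (starHits_union_le _ _ _ _)
      _ ≤ #(S t ∩ insert v (leafNbrs G v)) +
            ∑ i ∈ range t, #(S i ∩ insert v (leafNbrs G v)) :=
          add_le_add (starHits_le_card_inter_insert (self_notMem_leafNbrs v) _) ih
      _ = ∑ i ∈ range (t + 1), #(S i ∩ insert v (leafNbrs G v)) := by
          rw [sum_range_succ, add_comm]

theorem stmt12_general [Fintype V] (T : SimpleGraph V) (τ : V → ℕ)
    (hτ : ∀ u, 1 ≤ τ u ∧ τ u ≤ T.degree u)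
    (v : V) (hvA : lbar T v < τ v)
    (S : ℕ → Finset V) (k : ℕ) (hS : IsTTS T τ S k) :
    2 ≤ ∑ i ∈ Finset.range (k + 1), (S i ∩ insert v (leafNbrs T v)).card := by
  have hL : (leafNbrs T v).Nonempty :=
    leafNbrs_nonempty_of_lbar_lt_degree (hvA.trans_le (hτ v).2)
  calc 2 = starHits v (leafNbrs T v) (Qseq T τ S k) := by rw [hS.2, starHits_univ v hL]
    _ ≤ ∑ i ∈ range k, #(S i ∩ insert v (leafNbrs T v)) :=
        starHits_Qseq_le_sum (fun u _ => (hτ u).1) hvA S k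
    _ ≤ ∑ i ∈ range (k + 1), #(S i ∩ insert v (leafNbrs T v)) :=
        sum_le_sum_of_subset (range_subset_range.mpr k.le_succ)

/-- Lemma 3: Let `T` be a tree with thresholds `1 ≤ τ(u) ≤ d(u)` and let
`v` be a non-leaf node with `τ(v) > l̄(v)` (i.e. `v ∈ A`). Then every timed target set
`S_0, …, S_k` satisfies `Σ_{i=0}^{k} |S_i ∩ ({v} ∪ L(v))| ≥ 2`. -/
theorem stmt12 [Fintype V] (T : SimpleGraph V) (hT : T.IsTree) (τ : V → ℕ)
    (hτ : ∀ u, 1 ≤ τ u ∧ τ u ≤ T.degree u)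
    (v : V) (hv : 1 < T.degree v) (hvA : lbar T v < τ v)
    (S : ℕ → Finset V) (k : ℕ) (hS : IsTTS T τ S k) :
    2 ≤ ∑ i ∈ Finset.range (k + 1), (S i ∩ insert v (leafNbrs T v)).card :=
  stmt12_general T τ hτ v hvA S k hS
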